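/- arXiv:1801.00474 — 2 statements merged into one kernel-verified Lean document; each statement's English description precedes it below -/
import Mathlib

section
/- For all integers a ≥ 4, the complete graph K_a is not C(a,2)-anti-common: the blow-up of a rainbow coloring of K_a yields at least n^a/(a^a − a) + O(n^{a−1}) rainbow copies of K_a in K_n, which exceeds C(n,a)·C(a,2)!/C(a,2)^{C(a,2)}, the count from a random coloring. -/
open Filter Topology

/-- A copy of `H` (given by an injection `f`) in `K_n` is rainbow under the
edge-coloring `c` if all edges of the copy receive distinct colors. -/
def IsRainbow {m n r : ℕ} (H : SimpleGraph (Fin m)) (c : Sym2 (Fin n) → Fin r)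
    (f : Fin m ↪ Fin n) : Prop :=
  ∀ e₁ ∈ H.edgeSet, ∀ e₂ ∈ H.edgeSet, e₁ ≠ e₂ → c (e₁.map ⇑f) ≠ c (e₂.map ⇑f)

/-- Number of (labeled) rainbow copies of `H` in `K_n` under the coloring `c`. -/
noncomputable def rainbowCount {m n r : ℕ} (H : SimpleGraph (Fin m))
    (c : Sym2 (Fin n) → Fin r) : ℕ :=
  Nat.card {f : Fin m ↪ Fin n // IsRainbow H c f}

/-- `rbL H n r`: the maximum number of labeled rainbow copies of `H` over all
`r`-edge-colorings of `K_n`.  (The labeled count is `|Aut H|` times the number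
of rainbow copies `rb_r(H;n)` of the paper.) -/
noncomputable def rbL {m : ℕ} (H : SimpleGraph (Fin m)) (n r : ℕ) : ℕ :=
  sSup (Set.range fun c : Sym2 (Fin n) → Fin r => rainbowCount H c)

/-- The number of automorphisms of `H`. -/
noncomputable def autCard {m : ℕ} (H : SimpleGraph (Fin m)) : ℕ :=
  Nat.card (H ≃g H)

/-- `rbC H n r`: the maximum proportion of copies of `H` in `K_n` which are rainbow,
i.e. `rb_r(H;n) / (C(n,m)·m!/|Aut(H)|) = rbL H n r / (C(n,m)·m!)`. -/
noncomputable def rbC {m : ℕ} (H : SimpleGraph (Fin m)) (n r : ℕ) : ℝ :=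
  (rbL H n r : ℝ) / ((n.choose m) * (m.factorial))


/-!
Blow up a rainbow colouring `κ` of `K_a`: replace every vertex by a part of size `m`, colour an
edge between parts `p ≠ q` by `κ s(p, q)` and colour each part by an optimal colouring of `K_m`.
The `a! m ^ a` transversal copies of `K_a` are rainbow, so `f m := rbL K_a m / a!` satisfies
`f (a m) ≥ m ^ a + a f(m)`; together with monotonicity this gives
`f n ≥ n ^ a / (a ^ a - a) - O(n ^ (a - 1))`. As `C(n, a) a! ≤ n ^ a`, the rainbow proportion is
eventually at least `a! / (a ^ a - a) - O(1/n)`, and for `r = C(a, 2)` the bounds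
`a ^ a ≤ a! 2 ^ (r - 1)` and `2 ^ (r - 1) r! ≤ r ^ r` show `a! / (a ^ a - a) > r! / r ^ r`.
-/

open Nat

lemma one_le_pow_self_sub_self {a : ℕ} (ha : 2 ≤ a) : 1 ≤ (a : ℝ) ^ a - a := by
  have h2 : (a : ℝ) ^ 2 ≤ (a : ℝ) ^ a := pow_le_pow_right₀ (by norm_cast; omega) ha
  have : (2 : ℝ) ≤ a := by exact_mod_cast ha
  nlinarith

lemma two_mul_pow_self_le_succ_pow {r : ℕ} (hr : 1 ≤ r) : 2 * r ^ r ≤ (r + 1) ^ r := by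
  have h := pow_add_mul_le_add_pow (Nat.zero_le r) (Nat.zero_le (2 * r + 1)) r
  rw [mul_one, Nat.cast_id, mul_pow_sub_one (by omega)] at h
  omega

lemma two_pow_mul_factorial_le_pow_self (r : ℕ) : 2 ^ (r - 1) * r ! ≤ r ^ r := by
  induction r with
  | zero => simp
  | succ r ih =>
    rcases Nat.eq_zero_or_pos r with rfl | hr
    · simp
    calc 2 ^ (r + 1 - 1) * (r + 1)! = (r + 1) * (2 * (2 ^ (r - 1) * r !)) := by
          rw [factorial_succ, Nat.add_sub_cancel, ← mul_pow_sub_one hr.ne']; ring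
      _ ≤ (r + 1) * (2 * r ^ r) := by gcongr
      _ ≤ (r + 1) * (r + 1) ^ r := by gcongr; exact two_mul_pow_self_le_succ_pow hr
      _ = (r + 1) ^ (r + 1) := (pow_succ' _ _).symm

lemma pow_self_le_factorial_mul_two_pow {a : ℕ} (ha : 4 ≤ a) :
    a ^ a ≤ a ! * 2 ^ (a.choose 2 - 1) := by
  induction a, ha using Nat.le_induction with
  | base => decide
  | succ a ha ih =>
    have hchoose : (a + 1).choose 2 - 1 = (a.choose 2 - 1) + a := by
      have h1 : 1 ≤ a.choose 2 := Nat.choose_pos (by omega)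
      have h2 : (a + 1).choose 2 = a + a.choose 2 := by
        simp [Nat.choose_succ_succ', Nat.choose_one_right]
      omega
    calc (a + 1) ^ (a + 1) = (a + 1) * (a + 1) ^ a := pow_succ' _ _
      _ ≤ (a + 1) * (2 * a) ^ a := by gcongr; omega
      _ = (a + 1) * (2 ^ a * a ^ a) := by rw [mul_pow]
      _ ≤ (a + 1) * (2 ^ a * (a ! * 2 ^ (a.choose 2 - 1))) := by gcongr
      _ = (a + 1)! * 2 ^ ((a + 1).choose 2 - 1) := by
          rw [hchoose, factorial_succ, pow_add]; ring

lemma factorial_div_pow_lt_factorial_div {a : ℕ} (ha : 4 ≤ a) :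
    ((a.choose 2)! : ℝ) / (a.choose 2 : ℝ) ^ a.choose 2 < a ! / ((a : ℝ) ^ a - a) := by
  set r := a.choose 2
  have hr : 0 < r := Nat.choose_pos (by omega)
  have hA : (0 : ℝ) < (a : ℝ) ^ a - a := zero_lt_one.trans_le (one_le_pow_self_sub_self (by omega))
  have key : a ^ a * r ! ≤ a ! * r ^ r :=
    calc a ^ a * r ! ≤ a ! * 2 ^ (r - 1) * r ! := by
          gcongr; exact pow_self_le_factorial_mul_two_pow ha
      _ = a ! * (2 ^ (r - 1) * r !) := mul_assoc _ _ _
      _ ≤ a ! * r ^ r := by gcongr; exact two_pow_mul_factorial_le_pow_self r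
  have key' : (a : ℝ) ^ a * r ! ≤ a ! * (r : ℝ) ^ r := by exact_mod_cast key
  rw [div_lt_div_iff₀ (by positivity) hA]
  have hpos : (0 : ℝ) < a * (r ! : ℝ) := by positivity
  nlinarith

lemma sub_mul_pow_pred_le_sub_pow {x b : ℝ} (hb : 0 ≤ b) (hbx : b ≤ x) (k : ℕ) :
    x ^ k - k * b * x ^ (k - 1) ≤ (x - b) ^ k := by
  have := pow_add_mul_le_add_pow (hb.trans hbx) (by linarith : 0 ≤ 2 * x + -b) k
  rw [← sub_eq_add_neg] at this
  linarith

lemma pow_div_sub_le_of_mul_le {a n m : ℕ} (ha : 3 ≤ a) (hn : a ≤ n) (ham : a * m ≤ n)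
    (hna : n < a * m + a) :
    (n : ℝ) ^ a / ((a : ℝ) ^ a - a) - 2 * a ^ 2 * n ^ (a - 1) ≤
      ((a : ℝ) * m) ^ a / ((a : ℝ) ^ a - a) - 2 * a ^ 3 * m ^ (a - 1) := by
  have hA : 1 ≤ (a : ℝ) ^ a - a := one_le_pow_self_sub_self (by omega)
  have hnR : (a : ℝ) ≤ n := by exact_mod_cast hn
  have hamR : (a : ℝ) * m ≤ n := by exact_mod_cast ham
  have hnaR : (n : ℝ) - a ≤ a * m := by
    have : (n : ℝ) < a * m + a := by exact_mod_cast hna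
    linarith
  have hlead : (n : ℝ) ^ a - a ^ 2 * n ^ (a - 1) ≤ ((a : ℝ) * m) ^ a := by
    have := sub_mul_pow_pred_le_sub_pow (by positivity) hnR a
    have := pow_le_pow_left₀ (by linarith) hnaR a
    nlinarith
  have hlower : 2 * (a : ℝ) * m ^ (a - 1) ≤ n ^ (a - 1) := by
    have h2 : 2 * (a : ℝ) ≤ a ^ (a - 1) := by
      have : (a : ℝ) ^ 2 ≤ (a : ℝ) ^ (a - 1) := pow_le_pow_right₀ (by norm_cast; omega) (by omega)
      have : (3 : ℝ) ≤ a := by exact_mod_cast ha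
      nlinarith
    calc 2 * (a : ℝ) * m ^ (a - 1) ≤ a ^ (a - 1) * m ^ (a - 1) := by gcongr
      _ = ((a : ℝ) * m) ^ (a - 1) := (mul_pow _ _ _).symm
      _ ≤ n ^ (a - 1) := by gcongr
  have hdiv : ((n : ℝ) ^ a - a ^ 2 * n ^ (a - 1)) / ((a : ℝ) ^ a - a) ≤
      ((a : ℝ) * m) ^ a / ((a : ℝ) ^ a - a) := by gcongr
  have hA_drop : (a : ℝ) ^ 2 * n ^ (a - 1) / ((a : ℝ) ^ a - a) ≤ a ^ 2 * n ^ (a - 1) :=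
    div_le_self (by positivity) hA
  rw [sub_div] at hdiv
  have : (0 : ℝ) ≤ a ^ 2 := by positivity
  nlinarith

/-- If `f (a m) ≥ m ^ a + a f(m)`, iterating along `n, ⌊n/a⌋, ⌊n/a²⌋, …` gives
`f n ≳ n ^ a (1 + a/a^a + a²/a^{2a} + ⋯) / a^a = n ^ a / (a ^ a - a)`. -/
theorem pow_div_sub_le_of_recursion {a : ℕ} (ha : 3 ≤ a) {f : ℕ → ℝ} (hf₀ : ∀ n, 0 ≤ f n)
    (hmono : ∀ m n, 0 < m → m ≤ n → f m ≤ f n)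
    (hrec : ∀ m : ℕ, 0 < m → (m : ℝ) ^ a + a * f m ≤ f (a * m)) (n : ℕ) :
    (n : ℝ) ^ a / ((a : ℝ) ^ a - a) - 2 * a ^ 2 * n ^ (a - 1) ≤ f n := by
  set A : ℝ := (a : ℝ) ^ a - a
  have hA : 1 ≤ A := one_le_pow_self_sub_self (by omega)
  have hA0 : A ≠ 0 := by positivity
  induction n using Nat.strong_induction_on with
  | _ n ih =>
    rcases lt_or_ge n a with hn | hn
    · refine le_trans ?_ (hf₀ n)
      have hn' : (n : ℝ) ≤ a := by exact_mod_cast hn.le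
      have ha1 : (1 : ℝ) ≤ a := by norm_cast; omega
      rw [sub_nonpos]
      calc (n : ℝ) ^ a / A ≤ n ^ a := div_le_self (by positivity) hA
        _ = n * n ^ (a - 1) := (mul_pow_sub_one (by omega) _).symm
        _ ≤ 2 * a ^ 2 * n ^ (a - 1) := by gcongr; nlinarith
    set m := n / a
    have hm : 0 < m := Nat.div_pos hn (by omega)
    have ham : a * m ≤ n := Nat.mul_div_le n a
    have hna : n < a * m + a := Nat.mul_add_one a m ▸ Nat.lt_mul_div_succ n (by omega)
    calc (n : ℝ) ^ a / A - 2 * a ^ 2 * n ^ (a - 1)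
        ≤ ((a : ℝ) * m) ^ a / A - 2 * a ^ 3 * m ^ (a - 1) := pow_div_sub_le_of_mul_le ha hn ham hna
      _ = m ^ a + a * (m ^ a / A - 2 * a ^ 2 * m ^ (a - 1)) := by
          rw [mul_pow, show (a : ℝ) ^ a = A + a by ring]; field_simp; ring
      _ ≤ m ^ a + a * f m := by gcongr; exact ih m (Nat.div_lt_self (by omega) (by omega))
      _ ≤ f (a * m) := hrec m hm
      _ ≤ f n := hmono _ _ (by positivity) ham

section Rainbow

variable {m r : ℕ}

lemma rainbowCount_le_rbL {n : ℕ} (H : SimpleGraph (Fin m)) (c : Sym2 (Fin n) → Fin r) :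
    rainbowCount H c ≤ rbL H n r :=
  le_csSup (Set.finite_range _).bddAbove ⟨c, rfl⟩

lemma exists_rainbowCount_eq_rbL [NeZero r] (H : SimpleGraph (Fin m)) (n : ℕ) :
    ∃ c : Sym2 (Fin n) → Fin r, rainbowCount H c = rbL H n r :=
  Nat.sSup_mem (Set.range_nonempty _) (Set.finite_range _).bddAbove

lemma rainbowCount_le_rainbowCount_comp {n n' : ℕ} (H : SimpleGraph (Fin m))
    (c : Sym2 (Fin n) → Fin r) {ι : Fin n ↪ Fin n'} {ρ : Fin n' → Fin n}
    (hρ : Function.LeftInverse ρ ι) :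
    rainbowCount H c ≤ rainbowCount H (c ∘ Sym2.map ρ) := by
  have hcomp (f : Fin m ↪ Fin n) (e : Sym2 (Fin m)) :
      (c ∘ Sym2.map ρ) (e.map (f.trans ι)) = c (e.map f) := by
    simp [Sym2.map_map, hρ _]
  refine Nat.card_le_card_of_injective
    (fun f => ⟨f.1.trans ι, fun e₁ h₁ e₂ h₂ hne => ?_⟩) fun f g hfg => ?_
  · rw [hcomp, hcomp]; exact f.2 e₁ h₁ e₂ h₂ hne
  · exact Subtype.ext <| Function.Embedding.ext fun i =>
      ι.injective (DFunLike.congr_fun (congrArg Subtype.val hfg) i)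

lemma rbL_mono {n n' : ℕ} [NeZero r] [NeZero n] (H : SimpleGraph (Fin m)) (h : n ≤ n') :
    rbL H n r ≤ rbL H n' r := by
  obtain ⟨c, hc⟩ := exists_rainbowCount_eq_rbL (r := r) H n
  rw [← hc]
  exact (rainbowCount_le_rainbowCount_comp H c
    (Function.leftInverse_invFun (Fin.castLEEmb h).injective)).trans (rainbowCount_le_rbL H _)

lemma rbL_div_pow_le_rbC (H : SimpleGraph (Fin m)) {n : ℕ} (hmn : m ≤ n) :
    (rbL H n r : ℝ) / n ^ m ≤ rbC H n r := by
  have hpos : (0 : ℝ) < n.choose m * m ! := by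
    have := Nat.choose_pos hmn; positivity
  have hle : (n.choose m : ℝ) * m ! ≤ n ^ m :=
    (le_div_iff₀ (by positivity)).1 (Nat.choose_le_pow_div m n)
  exact div_le_div_of_nonneg_left (by positivity) hpos hle

end Rainbow

section BlowUp

variable {α β : Type*}

def transversalCopy (σ : Equiv.Perm α) (g : α → β) : α ↪ α × β :=
  ⟨fun i => (σ i, g i), fun _ _ h => σ.injective (Prod.ext_iff.1 h).1⟩

lemma coe_transversalCopy (σ : Equiv.Perm α) (g : α → β) :
    ⇑(transversalCopy σ g) = fun i => (σ i, g i) := rfl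

lemma injective_sumElim_transversalCopy [Nontrivial α] (P : (α ↪ β) → Prop) :
    (Sum.elim (fun x : Equiv.Perm α × (α → β) => transversalCopy x.1 x.2)
      fun x : α × {g // P g} => x.2.1.trans (Function.Embedding.sectR x.1 β)).Injective := by
  refine Function.Injective.sumElim ?_ ?_ fun x y h => ?_
  · intro x y h
    have h' i := Prod.ext_iff.1 (DFunLike.congr_fun h i)
    exact Prod.ext (Equiv.ext fun i => (h' i).1) (funext fun i => (h' i).2)
  · intro x y h
    have h' i := Prod.ext_iff.1 (DFunLike.congr_fun h i)
    exact Prod.ext (h' (Classical.arbitrary α)).1 <| Subtype.ext <| Function.Embedding.ext fun i => (h' i).2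
  · have h' i : x.1 i = y.1 := (Prod.ext_iff.1 (DFunLike.congr_fun h i)).1
    obtain ⟨i, j, hij⟩ := exists_pair_ne α
    exact hij (x.1.injective ((h' i).trans (h' j).symm))

variable {γ δ : Type*} [DecidableEq α]

def blowUpColoring (κ : Sym2 α → γ) (c₀ : Sym2 β → γ) : Sym2 (α × β) → γ :=
  Sym2.lift ⟨fun u v => if u.1 = v.1 then c₀ s(u.2, v.2) else κ s(u.1, v.1), fun u v => by
    by_cases h : u.1 = v.1 <;> simp [h, eq_comm, Sym2.eq_swap]⟩

lemma blowUpColoring_map_of_injective (κ : Sym2 α → γ) (c₀ : Sym2 β → γ) {σ : δ → α}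
    (hσ : σ.Injective) (g : δ → β) {s : Sym2 δ} (hs : ¬s.IsDiag) :
    blowUpColoring κ c₀ (s.map fun i => (σ i, g i)) = κ (s.map σ) := by
  induction s with
  | h i j => simp [blowUpColoring, hσ.ne (Sym2.mk_isDiag_iff.not.1 hs)]

lemma blowUpColoring_map_const (κ : Sym2 α → γ) (c₀ : Sym2 β → γ) (p : α) (g : δ → β)
    (s : Sym2 δ) : blowUpColoring κ c₀ (s.map fun i => (p, g i)) = c₀ (s.map g) := by
  induction s with
  | h i j => simp [blowUpColoring]

end BlowUp

section CompleteGraph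

open SimpleGraph

lemma autCard_completeGraph (a : ℕ) : autCard (completeGraph (Fin a)) = a ! := by
  have e : (completeGraph (Fin a) ≃g completeGraph (Fin a)) ≃ Equiv.Perm (Fin a) :=
    { toFun := RelIso.toEquiv
      invFun := Iso.completeGraph
      left_inv := fun _ => rfl
      right_inv := fun _ => rfl }
  rw [autCard, Nat.card_congr e, Nat.card_perm, Nat.card_eq_fintype_card, Fintype.card_fin]

variable {a m r : ℕ}

lemma exists_injOn_edgeSet_completeGraph [NeZero r] (hr : a.choose 2 ≤ r) :
    ∃ κ : Sym2 (Fin a) → Fin r, Set.InjOn κ (completeGraph (Fin a)).edgeSet := by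
  classical
  have hcard : Fintype.card (completeGraph (Fin a)).edgeSet ≤ Fintype.card (Fin r) := by
    rw [← edgeFinset_card, card_edgeFinset_top_eq_card_choose_two]; simpa using hr
  obtain ⟨ι⟩ := Function.Embedding.nonempty_of_card_le hcard
  exact Set.exists_injOn_iff_injective.2 ⟨ι, ι.injective⟩

/-- Vertex `v + m * p` of `K_{a m}` is the vertex `v` of the `p`-th part. -/
def blowUp (κ : Sym2 (Fin a) → Fin r) (c₀ : Sym2 (Fin m) → Fin r) : Sym2 (Fin (a * m)) → Fin r :=
  blowUpColoring κ c₀ ∘ Sym2.map finProdFinEquiv.symm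

lemma blowUp_map_trans (κ : Sym2 (Fin a) → Fin r) (c₀ : Sym2 (Fin m) → Fin r) {k : ℕ}
    (f : Fin k ↪ Fin a × Fin m) (s : Sym2 (Fin k)) :
    blowUp κ c₀ (s.map (f.trans finProdFinEquiv.toEmbedding)) = blowUpColoring κ c₀ (s.map f) := by
  rw [blowUp, Function.comp_apply, Sym2.map_map]
  congr 2
  funext i
  exact finProdFinEquiv.symm_apply_apply (f i)

lemma isRainbow_blowUp_transversalCopy {κ : Sym2 (Fin a) → Fin r}
    (hκ : Set.InjOn κ (completeGraph (Fin a)).edgeSet) (c₀ : Sym2 (Fin m) → Fin r)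
    (σ : Equiv.Perm (Fin a)) (g : Fin a → Fin m) :
    IsRainbow (completeGraph (Fin a)) (blowUp κ c₀)
      ((transversalCopy σ g).trans finProdFinEquiv.toEmbedding) := by
  have hdiag {s : Sym2 (Fin a)} (hs : s ∈ (completeGraph (Fin a)).edgeSet) : ¬s.IsDiag := by
    simpa using hs
  have hedge {s : Sym2 (Fin a)} (hs : s ∈ (completeGraph (Fin a)).edgeSet) :
      s.map σ ∈ (completeGraph (Fin a)).edgeSet := by
    simpa [Sym2.isDiag_map σ.injective] using hs
  intro s₁ h₁ s₂ h₂ hne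
  rw [blowUp_map_trans, blowUp_map_trans, coe_transversalCopy,
    blowUpColoring_map_of_injective _ _ σ.injective _ (hdiag h₁),
    blowUpColoring_map_of_injective _ _ σ.injective _ (hdiag h₂)]
  exact fun h => hne (Sym2.map.injective σ.injective (hκ (hedge h₁) (hedge h₂) h))

lemma IsRainbow.blowUp_sectR {c₀ : Sym2 (Fin m) → Fin r} {g : Fin a ↪ Fin m}
    (hg : IsRainbow (completeGraph (Fin a)) c₀ g) (κ : Sym2 (Fin a) → Fin r) (p : Fin a) :
    IsRainbow (completeGraph (Fin a)) (blowUp κ c₀)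
      ((g.trans (Function.Embedding.sectR p _)).trans finProdFinEquiv.toEmbedding) := by
  intro s₁ h₁ s₂ h₂ hne
  rw [blowUp_map_trans, blowUp_map_trans]
  exact blowUpColoring_map_const κ c₀ p g s₁ ▸ blowUpColoring_map_const κ c₀ p g s₂ ▸
    hg s₁ h₁ s₂ h₂ hne

lemma factorial_mul_pow_add_mul_rainbowCount_le (ha : 2 ≤ a) {κ : Sym2 (Fin a) → Fin r}
    (hκ : Set.InjOn κ (completeGraph (Fin a)).edgeSet) (c₀ : Sym2 (Fin m) → Fin r) :
    a ! * m ^ a + a * rainbowCount (completeGraph (Fin a)) c₀ ≤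
      rainbowCount (completeGraph (Fin a)) (blowUp κ c₀) := by
  have : Nontrivial (Fin a) := Fin.nontrivial_iff_two_le.2 ha
  let copy (u : Equiv.Perm (Fin a) × (Fin a → Fin m) ⊕
      Fin a × {g // IsRainbow (completeGraph (Fin a)) c₀ g}) :
      {f // IsRainbow (completeGraph (Fin a)) (blowUp κ c₀) f} :=
    ⟨(Sum.elim (fun x => transversalCopy x.1 x.2)
      (fun x => x.2.1.trans (Function.Embedding.sectR x.1 _)) u).trans
        finProdFinEquiv.toEmbedding, by
      rcases u with ⟨σ, g⟩ | ⟨p, g, hg⟩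
      exacts [isRainbow_blowUp_transversalCopy hκ c₀ σ g, hg.blowUp_sectR κ p]⟩
  have hcopy : copy.Injective := fun x y h =>
    injective_sumElim_transversalCopy _ <| Function.Embedding.ext fun i =>
      finProdFinEquiv.injective (DFunLike.congr_fun (congrArg Subtype.val h) i)
  simpa [Nat.card_sum, Nat.card_prod, Fintype.card_perm, rainbowCount] using
    Nat.card_le_card_of_injective copy hcopy

lemma factorial_mul_pow_add_mul_rbL_le (ha : 2 ≤ a) (hr : a.choose 2 ≤ r) :
    a ! * m ^ a + a * rbL (completeGraph (Fin a)) m r ≤ rbL (completeGraph (Fin a)) (a * m) r := by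
  have : NeZero r := ⟨by have := Nat.choose_pos ha; omega⟩
  obtain ⟨κ, hκ⟩ := exists_injOn_edgeSet_completeGraph hr
  obtain ⟨c₀, hc₀⟩ := exists_rainbowCount_eq_rbL (r := r) (completeGraph (Fin a)) m
  rw [← hc₀]
  exact (factorial_mul_pow_add_mul_rainbowCount_le ha hκ c₀).trans (rainbowCount_le_rbL _ _)

lemma pow_div_sub_le_rbL_div_factorial (ha : 3 ≤ a) (hr : a.choose 2 ≤ r) (n : ℕ) :
    (n : ℝ) ^ a / ((a : ℝ) ^ a - a) - 2 * a ^ 2 * n ^ (a - 1) ≤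
      rbL (completeGraph (Fin a)) n r / a ! := by
  have : NeZero r := ⟨by have := Nat.choose_pos (show 2 ≤ a by omega); omega⟩
  refine pow_div_sub_le_of_recursion (f := fun n => (rbL (completeGraph (Fin a)) n r : ℝ) / a !) ha
    (fun n => by positivity) (fun m n hm hmn => ?_) (fun m _ => ?_) n
  · have : NeZero m := ⟨hm.ne'⟩
    gcongr
    exact rbL_mono _ hmn
  · have h : ((a ! * m ^ a + a * rbL (completeGraph (Fin a)) m r : ℕ) : ℝ) ≤
        rbL (completeGraph (Fin a)) (a * m) r :=
      mod_cast factorial_mul_pow_add_mul_rbL_le (by omega) hr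
    rw [le_div_iff₀ (by positivity)]
    calc ((m : ℝ) ^ a + a * (rbL (completeGraph (Fin a)) m r / a !)) * a !
        = ((a ! * m ^ a + a * rbL (completeGraph (Fin a)) m r : ℕ) : ℝ) := by
          push_cast; field_simp
      _ ≤ _ := h

lemma factorial_div_sub_le_rbC (ha : 3 ≤ a) (hr : a.choose 2 ≤ r) {n : ℕ} (hn : a ≤ n) :
    (a ! : ℝ) / ((a : ℝ) ^ a - a) - a ! * (2 * a ^ 2) / n ≤ rbC (completeGraph (Fin a)) n r := by
  set A : ℝ := (a : ℝ) ^ a - a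
  have hA : 0 < A := zero_lt_one.trans_le (one_le_pow_self_sub_self (by omega))
  have hn0 : (0 : ℝ) < n := by norm_cast; omega
  calc (a ! : ℝ) / A - a ! * (2 * a ^ 2) / n
      = ((n : ℝ) ^ a / A - 2 * a ^ 2 * n ^ (a - 1)) * a ! / n ^ a := by
        rw [← pow_sub_one_mul (by omega : a ≠ 0)]; field_simp [hA.ne']
    _ ≤ (rbL (completeGraph (Fin a)) n r : ℝ) / n ^ a := by
        gcongr
        exact (le_div_iff₀ (by positivity)).1 (pow_div_sub_le_rbL_div_factorial ha hr n)
    _ ≤ rbC (completeGraph (Fin a)) n r := rbL_div_pow_le_rbC _ hn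

end CompleteGraph

theorem stmt14 (a : ℕ) (ha : 4 ≤ a) :
    (∃ C : ℝ, ∃ N : ℕ, ∀ n ≥ N,
      (rbL (SimpleGraph.completeGraph (Fin a)) n (a.choose 2) : ℝ) / autCard (SimpleGraph.completeGraph (Fin a))
        ≥ (n : ℝ) ^ a / ((a : ℝ) ^ a - a) - C * (n : ℝ) ^ (a - 1)) ∧
    ¬ Tendsto (fun n => rbC (SimpleGraph.completeGraph (Fin a)) n (a.choose 2)) atTop
        (𝓝 (((a.choose 2).factorial : ℝ) / ((a.choose 2 : ℝ) ^ (a.choose 2)))) := by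
  have hK : autCard (SimpleGraph.completeGraph (Fin a)) = a ! := autCard_completeGraph a
  refine ⟨⟨2 * a ^ 2, 0, fun n _ => hK ▸ pow_div_sub_le_rbL_div_factorial (by omega) le_rfl n⟩,
    fun hT => ?_⟩
  have hlim : Tendsto (fun n : ℕ => (a ! : ℝ) / ((a : ℝ) ^ a - a) - a ! * (2 * a ^ 2) / n) atTop
      (𝓝 (a ! / ((a : ℝ) ^ a - a))) := by
    simpa using (tendsto_const_nhds (x := (a ! : ℝ) / ((a : ℝ) ^ a - a))).sub
      (tendsto_const_div_atTop_nhds_zero_nat ((a ! : ℝ) * (2 * a ^ 2)))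
  have hev := (eventually_ge_atTop a).mono fun n hn =>
    factorial_div_sub_le_rbC (r := a.choose 2) (by omega) le_rfl hn
  exact (factorial_div_pow_lt_factorial_div ha).not_ge (le_of_tendsto_of_tendsto hlim hT hev)
end

section
/- For any graph H with e edges and any r ≥ e and n, rb_{r+1}(H;n) ≥ rb_r(H;n) ≥ ((r+e)(r+1−e)/(r(r+1)))·rb_{r+1}(H;n). -/
open Filter Topology

open Classical in
noncomputable def RBset {m n r : ℕ} (H : SimpleGraph (Fin m)) (c : Sym2 (Fin n) → Fin r) :
    Finset (Fin m ↪ Fin n) := Finset.univ.filter (IsRainbow H c)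

lemma rainbowCount_eq {m n r : ℕ} (H : SimpleGraph (Fin m)) (c : Sym2 (Fin n) → Fin r) :
    rainbowCount H c = (RBset H c).card := by
  classical
  rw [rainbowCount, Nat.card_eq_fintype_card, Fintype.card_subtype, RBset]

lemma rb_bdd {m n r : ℕ} (H : SimpleGraph (Fin m)) :
    BddAbove (Set.range fun c : Sym2 (Fin n) → Fin r => rainbowCount H c) := by
  classical
  refine ⟨Fintype.card (Fin m ↪ Fin n), ?_⟩
  rintro x ⟨c, rfl⟩
  dsimp only
  rw [rainbowCount_eq]
  exact le_trans (Finset.card_filter_le _ _) (by simp)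

lemma rainbowCount_le {m n r : ℕ} (H : SimpleGraph (Fin m)) (c : Sym2 (Fin n) → Fin r) :
    rainbowCount H c ≤ rbL H n r :=
  le_csSup (rb_bdd H) ⟨c, rfl⟩

lemma exists_opt {m n r : ℕ} (H : SimpleGraph (Fin m)) (hr : 0 < r) :
    ∃ c : Sym2 (Fin n) → Fin r, rainbowCount H c = rbL H n r := by
  have hne : (Set.range fun c : Sym2 (Fin n) → Fin r => rainbowCount H c).Nonempty :=
    ⟨_, ⟨fun _ => ⟨0, hr⟩, rfl⟩⟩
  exact Nat.sSup_mem hne (rb_bdd H)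

lemma rb_key {m : ℕ} (H : SimpleGraph (Fin m)) (n R : ℕ)
    (hre : Nat.card H.edgeSet ≤ R + 1) :
    (R + 1 + Nat.card H.edgeSet) * (R + 2 - Nat.card H.edgeSet) * rbL H n (R + 2)
      ≤ (R + 2) * (R + 1) * rbL H n (R + 1) := by
  classical
  set e := Nat.card H.edgeSet with he
  obtain ⟨c, hc⟩ := exists_opt (n := n) (r := R + 2) H (by omega)
  set E : Finset (Sym2 (Fin m)) := H.edgeSet.toFinset with hE
  have hEcard : E.card = e := by
    rw [hE, Set.toFinset_card, he, Nat.card_eq_fintype_card]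
  have hmemE : ∀ x, x ∈ E ↔ x ∈ H.edgeSet := fun x => Set.mem_toFinset
  set L : Fin (R + 2) := Fin.last (R + 1) with hL
  set del : Fin (R + 2) → Fin (R + 2) → Fin (R + 1) := fun t a =>
    if h : Equiv.swap t L a = L then 0 else (Equiv.swap t L a).castPred h with hdeldef
  have hdel : ∀ t a b, a ≠ t → b ≠ t → del t a = del t b → a = b := by
    intro t a b ha hb h
    have ha' : Equiv.swap t L a ≠ L := fun hh =>
      ha ((Equiv.swap t L).injective (hh.trans (Equiv.swap_apply_left t L).symm))
    have hb' : Equiv.swap t L b ≠ L := fun hh =>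
      hb ((Equiv.swap t L).injective (hh.trans (Equiv.swap_apply_left t L).symm))
    rw [hdeldef] at h
    simp only [dif_neg ha', dif_neg hb'] at h
    exact (Equiv.swap t L).injective (Fin.castPred_inj.mp h)
  set c2 : Fin (R + 2) → Fin (R + 1) → Sym2 (Fin n) → Fin (R + 1) := fun t v x =>
    if c x = t then v else del t (c x) with hc2
  -- per-copy bound
  have perf : ∀ f : Fin m ↪ Fin n, IsRainbow H c f →
      (R + 1 + e) * (R + 2 - e) ≤
        ∑ t : Fin (R + 2), ∑ v : Fin (R + 1),
          (if IsRainbow H (c2 t v) f then 1 else 0) := by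
    intro f hf
    set T : Finset (Fin (R + 2)) := E.image (fun x : Sym2 (Fin m) => c (x.map ⇑f)) with hT
    have hinj : Set.InjOn (fun x : Sym2 (Fin m) => c (x.map ⇑f)) E := by
      intro x hx y hy hxy
      by_contra hne
      exact hf x ((hmemE x).mp hx) y ((hmemE y).mp hy) hne hxy
    have hTcard : T.card = e := by rw [hT, Finset.card_image_of_injOn hinj, hEcard]
    have hA : ∀ t ∉ T, ∀ v, IsRainbow H (c2 t v) f := by
      intro t ht v e₁ h1 e₂ h2 hne12 hcc
      have h1' : c (e₁.map f) ≠ t := fun hh =>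
        ht (Finset.mem_image.mpr ⟨e₁, (hmemE e₁).mpr h1, hh⟩)
      have h2' : c (e₂.map f) ≠ t := fun hh =>
        ht (Finset.mem_image.mpr ⟨e₂, (hmemE e₂).mpr h2, hh⟩)
      rw [hc2] at hcc
      simp only [if_neg h1', if_neg h2'] at hcc
      exact hf e₁ h1 e₂ h2 hne12 (hdel t _ _ h1' h2' hcc)
    have hB : ∀ t ∈ T, (R + 2 - e : ℕ) ≤
        ∑ v : Fin (R + 1), (if IsRainbow H (c2 t v) f then 1 else 0) := by
      intro t ht
      obtain ⟨x₀, hx₀E, hx₀⟩ := Finset.mem_image.mp ht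
      set W : Finset (Fin (R + 1)) := (E.erase x₀).image (fun x : Sym2 (Fin m) => del t (c (x.map ⇑f))) with hW
      have hWcard : W.card ≤ e - 1 := by
        calc W.card ≤ (E.erase x₀).card := Finset.card_image_le
        _ = e - 1 := by rw [Finset.card_erase_of_mem hx₀E, hEcard]
      have hgood : ∀ v ∉ W, IsRainbow H (c2 t v) f := by
        intro v hv e₁ h1 e₂ h2 hne12 hcc
        have huniq : ∀ x ∈ E, c (x.map f) = t → x = x₀ := fun x hx hxt =>
          hinj hx hx₀E (hxt.trans hx₀.symm)
        rw [hc2] at hcc; dsimp only at hcc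
        by_cases hcx1 : c (e₁.map f) = t
        · have he1 : e₁ = x₀ := huniq e₁ ((hmemE e₁).mpr h1) hcx1
          have hcx2 : c (e₂.map f) ≠ t := by
            intro hh
            exact hne12 (he1.trans (huniq e₂ ((hmemE e₂).mpr h2) hh).symm)
          rw [if_pos hcx1, if_neg hcx2] at hcc
          apply hv
          rw [hW, hcc]
          exact Finset.mem_image.mpr ⟨e₂,
            Finset.mem_erase.mpr ⟨fun hh => hcx2 (by rw [hh]; exact hx₀), (hmemE e₂).mpr h2⟩, rfl⟩
        · by_cases hcx2 : c (e₂.map f) = t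
          · rw [if_neg hcx1, if_pos hcx2] at hcc
            apply hv
            rw [hW, ← hcc]
            exact Finset.mem_image.mpr ⟨e₁,
              Finset.mem_erase.mpr ⟨fun hh => hcx1 (by rw [hh]; exact hx₀), (hmemE e₁).mpr h1⟩, rfl⟩
          · rw [if_neg hcx1, if_neg hcx2] at hcc
            exact hf e₁ h1 e₂ h2 hne12 (hdel t _ _ hcx1 hcx2 hcc)
      have hsub : Wᶜ ⊆ Finset.univ.filter (fun v => IsRainbow H (c2 t v) f) := by
        intro v hv
        exact Finset.mem_filter.mpr ⟨Finset.mem_univ v, hgood v (Finset.mem_compl.mp hv)⟩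
      have h1 : (R + 1) - W.card ≤ (Finset.univ.filter (fun v => IsRainbow H (c2 t v) f)).card := by
        have := Finset.card_le_card hsub
        rwa [Finset.card_compl, Fintype.card_fin] at this
      have he1 : 1 ≤ e := by
        rw [← hEcard]; exact Finset.card_pos.mpr ⟨x₀, hx₀E⟩
      have hcf : ∑ v : Fin (R + 1), (if IsRainbow H (c2 t v) f then 1 else 0)
          = (Finset.univ.filter (fun v => IsRainbow H (c2 t v) f)).card :=
        (Finset.card_filter _ _).symm
      omega
    have hTpart : e * (R + 2 - e) ≤ ∑ t ∈ T, ∑ v : Fin (R + 1),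
        (if IsRainbow H (c2 t v) f then 1 else 0) := by
      have := Finset.card_nsmul_le_sum T
        (fun t => ∑ v : Fin (R + 1), (if IsRainbow H (c2 t v) f then 1 else 0))
        (R + 2 - e) hB
      rwa [smul_eq_mul, hTcard] at this
    have hCpart : ∑ t ∈ Tᶜ, ∑ v : Fin (R + 1),
        (if IsRainbow H (c2 t v) f then 1 else 0) = (R + 2 - e) * (R + 1) := by
      have hconst : ∀ t ∈ Tᶜ, (∑ v : Fin (R + 1),
          (if IsRainbow H (c2 t v) f then 1 else 0)) = R + 1 := by
        intro t ht
        rw [Finset.sum_congr rfl (fun v _ => if_pos (hA t (Finset.mem_compl.mp ht) v))]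
        simp
      rw [Finset.sum_congr rfl hconst, Finset.sum_const, Finset.card_compl, hTcard,
        Fintype.card_fin, smul_eq_mul]
    have harith : (R + 1 + e) * (R + 2 - e) ≤ e * (R + 2 - e) + (R + 2 - e) * (R + 1) := by
      set k := R + 2 - e with hk
      have h1 : e * k + k * (R + 1) = (R + 1 + e) * k := by ring
      omega
    calc (R + 1 + e) * (R + 2 - e) ≤ e * (R + 2 - e) + (R + 2 - e) * (R + 1) := harith
      _ ≤ (∑ t ∈ T, ∑ v : Fin (R + 1), (if IsRainbow H (c2 t v) f then 1 else 0))
          + ∑ t ∈ Tᶜ, ∑ v : Fin (R + 1), (if IsRainbow H (c2 t v) f then 1 else 0) :=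
        add_le_add hTpart hCpart.ge
      _ = _ := Finset.sum_add_sum_compl T _
  -- global double counting
  have upper : ∑ t : Fin (R + 2), ∑ v : Fin (R + 1), (RBset H (c2 t v)).card
      ≤ (R + 2) * (R + 1) * rbL H n (R + 1) := by
    calc ∑ t : Fin (R + 2), ∑ v : Fin (R + 1), (RBset H (c2 t v)).card
        ≤ ∑ _t : Fin (R + 2), ∑ _v : Fin (R + 1), rbL H n (R + 1) := by
          refine Finset.sum_le_sum fun t _ => Finset.sum_le_sum fun v _ => ?_
          rw [← rainbowCount_eq]
          exact rainbowCount_le H _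
      _ = (R + 2) * (R + 1) * rbL H n (R + 1) := by
          simp [Finset.sum_const, mul_assoc]
  have hcard : ∀ c' : Sym2 (Fin n) → Fin (R + 1), (RBset H c').card
      = ∑ f : Fin m ↪ Fin n, (if IsRainbow H c' f then 1 else 0) := fun c' => by
    rw [RBset, Finset.card_filter]
  have step1 : ∀ t v, (∑ f ∈ RBset H c, (if IsRainbow H (c2 t v) f then 1 else 0))
      ≤ (RBset H (c2 t v)).card := by
    intro t v
    rw [hcard]
    exact Finset.sum_le_sum_of_subset (Finset.subset_univ _)
  have swap : (∑ t : Fin (R + 2), ∑ v : Fin (R + 1), ∑ f ∈ RBset H c,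
        (if IsRainbow H (c2 t v) f then 1 else 0))
      = ∑ f ∈ RBset H c, ∑ t : Fin (R + 2), ∑ v : Fin (R + 1),
        (if IsRainbow H (c2 t v) f then 1 else 0) := by
    calc (∑ t : Fin (R + 2), ∑ v : Fin (R + 1), ∑ f ∈ RBset H c,
          (if IsRainbow H (c2 t v) f then 1 else 0))
        = ∑ t : Fin (R + 2), ∑ f ∈ RBset H c, ∑ v : Fin (R + 1),
          (if IsRainbow H (c2 t v) f then 1 else 0) :=
        Finset.sum_congr rfl fun t _ => Finset.sum_comm
      _ = _ := Finset.sum_comm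
  have lower : (R + 1 + e) * (R + 2 - e) * rbL H n (R + 2)
      ≤ ∑ t : Fin (R + 2), ∑ v : Fin (R + 1), (RBset H (c2 t v)).card := by
    calc (R + 1 + e) * (R + 2 - e) * rbL H n (R + 2)
        = (RBset H c).card * ((R + 1 + e) * (R + 2 - e)) := by
          rw [← rainbowCount_eq, hc]; ring
      _ ≤ ∑ f ∈ RBset H c, ∑ t : Fin (R + 2), ∑ v : Fin (R + 1),
          (if IsRainbow H (c2 t v) f then 1 else 0) := by
          rw [← smul_eq_mul]
          refine Finset.card_nsmul_le_sum _ _ _ fun f hfmem => ?_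
          have : IsRainbow H c f := by
            rw [RBset] at hfmem
            exact (Finset.mem_filter.mp hfmem).2
          exact perf f this
      _ = _ := swap.symm
      _ ≤ _ := Finset.sum_le_sum fun t _ => Finset.sum_le_sum fun v _ => step1 t v
  exact le_trans lower upper

lemma rb_mono {m n r : ℕ} (H : SimpleGraph (Fin m)) (hr : 0 < r) :
    rbL H n r ≤ rbL H n (r + 1) := by
  have hne : (Set.range fun c : Sym2 (Fin n) → Fin r => rainbowCount H c).Nonempty :=
    ⟨_, ⟨fun _ => ⟨0, hr⟩, rfl⟩⟩
  refine csSup_le hne ?_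
  rintro x ⟨c, rfl⟩
  have h : rainbowCount H c = rainbowCount H (fun x => Fin.castSucc (c x)) := by
    unfold rainbowCount
    refine Nat.card_congr (Equiv.subtypeEquivRight fun f => ?_)
    unfold IsRainbow
    constructor
    · intro h e₁ h1 e₂ h2 hne12 hc
      exact h e₁ h1 e₂ h2 hne12 (Fin.castSucc_injective _ hc)
    · intro h e₁ h1 e₂ h2 hne12 hc
      exact h e₁ h1 e₂ h2 hne12 (by dsimp only; rw [hc])
  dsimp only
  rw [h]
  exact rainbowCount_le H _

theorem stmt18 {m : ℕ} (H : SimpleGraph (Fin m)) (n r : ℕ) (hr0 : 0 < r)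
    (hre : Nat.card H.edgeSet ≤ r) :
    (rbL H n r : ℝ) ≤ (rbL H n (r + 1) : ℝ) ∧
    (((r : ℝ) + Nat.card H.edgeSet) * ((r : ℝ) + 1 - Nat.card H.edgeSet)
        / ((r : ℝ) * ((r : ℝ) + 1))) * (rbL H n (r + 1) : ℝ)
      ≤ (rbL H n r : ℝ) := by
  obtain ⟨R, rfl⟩ : ∃ R, r = R + 1 := ⟨r - 1, by omega⟩
  constructor
  · exact_mod_cast rb_mono H (by omega)
  · have hk := rb_key H n R (by omega)
    have hRR : rbL H n (R + 1 + 1) = rbL H n (R + 2) := rfl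
    rw [div_mul_eq_mul_div, div_le_iff₀ (by positivity), hRR]
    have h2 : Nat.card H.edgeSet ≤ R + 2 := by omega
    have hk' : (((R + 1 + Nat.card H.edgeSet) * (R + 2 - Nat.card H.edgeSet)
        * rbL H n (R + 2) : ℕ) : ℝ) ≤ (((R + 2) * (R + 1) * rbL H n (R + 1) : ℕ) : ℝ) :=
      Nat.cast_le.mpr hk
    push_cast [Nat.cast_sub h2] at hk'
    push_cast
    nlinarith [hk']
end
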